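/- Let q ≥ 1 and a_1,…,a_q, b_1,…,b_q > 0. Suppose the chain e_q(b)/e_q(a) ≥ e_{q-1}(b)/e_{q-1}(a) ≥ ⋯ ≥ e_1(b)/e_1(a) ≥ 1 of ratios of elementary symmetric polynomials holds. Then the function R(x) = ∏_{i=1}^q (a_i + x)/(b_i + x) is nondecreasing on [0, ∞). -/
import Mathlib

open Finset Real MeasureTheory

noncomputable def rise (a : ℝ) (n : ℕ) : ℝ := ∏ k ∈ Finset.range n, (a + k)

noncomputable def esym {q : ℕ} (k : ℕ) (a : Fin q → ℝ) : ℝ :=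
  ∑ s ∈ Finset.powersetCard k (Finset.univ : Finset (Fin q)), ∏ i ∈ s, a i

lemma esym_pos {q : ℕ} (k : ℕ) (hk : k ≤ q) (a : Fin q → ℝ) (ha : ∀ i, 0 < a i) :
    0 < esym k a := by
  apply Finset.sum_pos
  · intro s hs
    exact Finset.prod_pos fun i _ => ha i
  · exact Finset.powersetCard_nonempty.2 (by simpa using hk)

lemma expand {q : ℕ} (a : Fin q → ℝ) (x : ℝ) :
    ∏ i, (a i + x) = ∑ m ∈ Finset.range (q + 1), esym m a * x ^ (q - m) := by
  rw [Finset.prod_add, Finset.sum_powerset]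
  simp only [Finset.card_univ, Fintype.card_fin]
  refine Finset.sum_congr rfl fun m hm => ?_
  rw [esym, Finset.sum_mul]
  refine Finset.sum_congr rfl fun t ht => ?_
  have hcard : t.card = m := (Finset.mem_powersetCard.1 ht).2
  rw [Finset.prod_const, Finset.card_sdiff_of_subset (Finset.subset_univ t),
    Finset.card_univ, Fintype.card_fin, hcard]

theorem stmt18 (q : ℕ) (hq : 1 ≤ q) (a b : Fin q → ℝ)
    (ha : ∀ i, 0 < a i) (hb : ∀ i, 0 < b i)
    (hchain : ∀ i : ℕ, i < q → esym i b / esym i a ≤ esym (i + 1) b / esym (i + 1) a) :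
    MonotoneOn (fun x : ℝ => ∏ i, (a i + x) / (b i + x)) (Set.Ici 0) := by
  -- ratio monotone
  have hr : ∀ m, m ≤ q → ∀ n, n ≤ m → esym n b / esym n a ≤ esym m b / esym m a := by
    intro m
    induction m with
    | zero => intro _ n hn; interval_cases n; exact le_refl _
    | succ m ih =>
      intro hm n hn
      rcases Nat.lt_or_ge n (m+1) with h | h
      · exact le_trans (ih (le_of_lt (Nat.lt_of_lt_of_le (Nat.lt_succ_self m) hm)) n
          (Nat.lt_succ_iff.1 h)) (hchain m (Nat.lt_of_lt_of_le (Nat.lt_succ_self m) hm))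
      · have : n = m + 1 := le_antisymm hn h
        rw [this]
  -- cross-multiplied version
  have hcross : ∀ n m, n ≤ m → m ≤ q → esym n b * esym m a ≤ esym m b * esym n a := by
    intro n m hnm hm
    have h1 := hr m hm n (le_trans hnm (le_refl m))
    have pan := esym_pos n (le_trans hnm hm) a ha
    have pam := esym_pos m hm a ha
    exact (div_le_div_iff₀ pan pam).1 h1
  intro x hx y hy hxy
  simp only [Set.mem_Ici] at hx hy
  simp only
  have hax : ∀ i, (0:ℝ) < a i + x := fun i => by linarith [ha i]
  have hbx : ∀ i, (0:ℝ) < b i + x := fun i => by linarith [hb i]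
  have hay : ∀ i, (0:ℝ) < a i + y := fun i => by linarith [ha i, hxy]
  have hby : ∀ i, (0:ℝ) < b i + y := fun i => by linarith [hb i, hxy]
  rw [Finset.prod_div_distrib, Finset.prod_div_distrib]
  rw [div_le_div_iff₀ (Finset.prod_pos fun i _ => hbx i) (Finset.prod_pos fun i _ => hby i)]
  -- key inequality
  rw [expand a x, expand a y, expand b x, expand b y]
  rw [Finset.sum_mul_sum, Finset.sum_mul_sum]
  -- goal: ∑ m ∑ n, esym m a x^(q-m) * (esym n b y^(q-n)) ≤ ∑ m ∑ n, esym m a y^(q-m) * esym n b x^(q-n)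
  rw [← sub_nonneg, ← Finset.sum_sub_distrib]
  simp_rw [← Finset.sum_sub_distrib]
  set f : ℕ → ℕ → ℝ := fun m n =>
    esym m a * y ^ (q - m) * (esym n b * x ^ (q - n)) -
    esym m a * x ^ (q - m) * (esym n b * y ^ (q - n)) with hf
  show 0 ≤ ∑ m ∈ Finset.range (q+1), ∑ n ∈ Finset.range (q+1), f m n
  have hswap : ∑ m ∈ Finset.range (q+1), ∑ n ∈ Finset.range (q+1), f m n
      = ∑ m ∈ Finset.range (q+1), ∑ n ∈ Finset.range (q+1), f n m := Finset.sum_comm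
  have key : ∀ m n, m ≤ q → n ≤ q → 0 ≤ f m n + f n m := by
    have main : ∀ m n, n ≤ m → m ≤ q → 0 ≤ f m n + f n m := by
      intro m n hnm hm
      have hc := hcross n m hnm hm
      have hxq : ∀ p r : ℕ, p ≤ r → y ^ p * x ^ r - x ^ p * y ^ r ≤ 0 := by
        intro p r hpr
        obtain ⟨d, rfl⟩ := Nat.exists_eq_add_of_le hpr
        rw [pow_add, pow_add]
        have h1 : y ^ p * (x ^ p * x ^ d) - x ^ p * (y ^ p * y ^ d)
            = x ^ p * y ^ p * (x ^ d - y ^ d) := by ring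
        rw [h1]
        apply mul_nonpos_of_nonneg_of_nonpos
        · positivity
        · have := pow_le_pow_left₀ hx hxy d
          linarith
      have hfact : f m n + f n m =
          (esym m a * esym n b - esym n a * esym m b) *
          (y ^ (q - m) * x ^ (q - n) - x ^ (q - m) * y ^ (q - n)) := by
        simp only [hf]; ring
      rw [hfact]
      have h1 : esym m a * esym n b - esym n a * esym m b ≤ 0 := by linarith
      have h2 := hxq (q - m) (q - n) (Nat.sub_le_sub_left hnm q)
      exact mul_nonneg_of_nonpos_of_nonpos h1 h2
    intro m n hm hn
    rcases le_total n m with h | h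
    · exact main m n h hm
    · have := main n m h hn; linarith [this]
  have h2 : 0 ≤ 2 * ∑ m ∈ Finset.range (q+1), ∑ n ∈ Finset.range (q+1), f m n := by
    rw [two_mul]
    nth_rewrite 2 [hswap]
    rw [← Finset.sum_add_distrib]
    simp_rw [← Finset.sum_add_distrib]
    apply Finset.sum_nonneg
    intro m hm
    apply Finset.sum_nonneg
    intro n hn
    exact key m n (Nat.lt_succ_iff.1 (Finset.mem_range.1 hm)) (Nat.lt_succ_iff.1 (Finset.mem_range.1 hn))
  linarith
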